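/- Deciding whether a set of non-betweenness constraints C over a finite set V is satisfiable by some linear order is fixed-parameter tractable in the number k of complementary pairs of connected components of the formula graph: satisfiability holds iff no component of G_C contains complementary vertices and at least one of the 2^k component-orientations yields an acyclic directed graph. -/

import Mathlib

/-- A non-betweenness constraint `(i, j, k)` is satisfied by a strict order `r`
if `j` is not strictly between `i` and `k`. -/
def nbSat {V : Type*} (r : V → V → Prop) (c : V × V × V) : Prop :=
  ¬ (r c.1 c.2.1 ∧ r c.2.1 c.2.2) ∧ ¬ (r c.2.2 c.2.1 ∧ r c.2.1 c.1)

/-- Ordered pairs of distinct elements: the vertices of the formula graph. -/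
abbrev Pairs (V : Type*) := {p : V × V // p.1 ≠ p.2}

/-- The complementary (reversed) vertex. -/
def pswap {V : Type*} (u : Pairs V) : Pairs V := ⟨(u.1.2, u.1.1), u.2.symm⟩

/-- Adjacency in the formula graph `G_C`. -/
def FGAdj {V : Type*} (C : Set (V × V × V)) (u v : Pairs V) : Prop :=
  ∃ c ∈ C, (u.1 = (c.1, c.2.1) ∧ v.1 = (c.2.2, c.2.1)) ∨
           (u.1 = (c.2.1, c.1) ∧ v.1 = (c.2.1, c.2.2))

/-- `S` is a connected component of the formula graph. -/
def IsComp {V : Type*} (C : Set (V × V × V)) (S : Set (Pairs V)) : Prop :=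
  ∃ u, S = {v | Relation.EqvGen (FGAdj C) u v}

/-!
A strict total order `r` satisfies the constraint `(a, b, c)` with `a, c ≠ b` exactly when
`r a b ↔ r c b`, i.e. when it orients both ends `(a, b)` and `(c, b)` of the corresponding edge
of `G_C` alike. So `r` satisfies `C` iff the orientation `u ↦ r u.1 u.2` is constant on every
component. A vertex and its complement are always oriented oppositely, hence they cannot share a
component, and every component is kept or reversed by `r`. Conversely, take one component from
each complementary pair: an order that keeps or reverses each of them is constant on all
components, hence satisfies `C`.
-/

open Relation

section

variable {V : Type*}

lemma pswap_involutive : Function.Involutive (pswap : Pairs V → Pairs V) := fun _ => rfl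

section Complement

variable {C : Set (V × V × V)} {u v : Pairs V}

lemma FGAdj.pswap (h : FGAdj C u v) : FGAdj C (pswap u) (pswap v) := by
  obtain ⟨c, hc, ⟨h1, h2⟩ | ⟨h1, h2⟩⟩ := h
  · exact ⟨c, hc, Or.inr ⟨by simp [_root_.pswap, h1], by simp [_root_.pswap, h2]⟩⟩
  · exact ⟨c, hc, Or.inl ⟨by simp [_root_.pswap, h1], by simp [_root_.pswap, h2]⟩⟩

lemma Relation.EqvGen.pswap (h : EqvGen (FGAdj C) u v) :
    EqvGen (FGAdj C) (pswap u) (pswap v) := by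
  induction h with
  | rel _ _ h => exact .rel _ _ h.pswap
  | refl _ => exact .refl _
  | symm _ _ _ ih => exact .symm _ _ ih
  | trans _ _ _ _ _ ih₁ ih₂ => exact .trans _ _ _ ih₁ ih₂

lemma IsComp.mem_of_fgAdj {S : Set (Pairs V)} (hS : IsComp C S) (hu : u ∈ S)
    (h : FGAdj C u v) : v ∈ S := by
  obtain ⟨w, rfl⟩ := hS
  exact EqvGen.trans _ _ _ hu (.rel _ _ h)

end Complement

section Orientation

variable (r : V → V → Prop) [IsStrictTotalOrder V r]

lemma rel_swap_iff_not {a b : V} (hab : a ≠ b) : r b a ↔ ¬ r a b :=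
  ⟨fun h h' => asymm h h', fun h => ((trichotomous_of r a b).resolve_left h).resolve_left hab⟩

lemma rel_pswap_iff_not (u : Pairs V) : r (pswap u).1.1 (pswap u).1.2 ↔ ¬ r u.1.1 u.1.2 :=
  rel_swap_iff_not r u.2

lemma nbSat_iff_rel_iff_rel {c : V × V × V} (h₁ : c.1 ≠ c.2.1) (h₂ : c.2.2 ≠ c.2.1) :
    nbSat r c ↔ (r c.1 c.2.1 ↔ r c.2.2 c.2.1) := by
  unfold nbSat
  rw [rel_swap_iff_not r h₂.symm, rel_swap_iff_not r h₁.symm]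
  tauto

variable {r} {C : Set (V × V × V)}

lemma rel_iff_of_fgAdj (hsat : ∀ c ∈ C, nbSat r c) {u v : Pairs V} (h : FGAdj C u v) :
    r u.1.1 u.1.2 ↔ r v.1.1 v.1.2 := by
  have first_form : ∀ u v : Pairs V, ∀ c ∈ C, u.1 = (c.1, c.2.1) → v.1 = (c.2.2, c.2.1) →
      (r u.1.1 u.1.2 ↔ r v.1.1 v.1.2) := by
    rintro ⟨_, hp⟩ ⟨_, hq⟩ c hc rfl rfl
    exact (nbSat_iff_rel_iff_rel r hp hq).1 (hsat c hc)
  obtain ⟨c, hc, ⟨hu, hv⟩ | ⟨hu, hv⟩⟩ := h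
  · exact first_form u v c hc hu hv
  · rw [← not_iff_not, ← rel_pswap_iff_not, ← rel_pswap_iff_not]
    exact first_form _ _ c hc (by simp [pswap, hu]) (by simp [pswap, hv])

lemma rel_iff_of_eqvGen (hsat : ∀ c ∈ C, nbSat r c) {u v : Pairs V}
    (h : EqvGen (FGAdj C) u v) : r u.1.1 u.1.2 ↔ r v.1.1 v.1.2 := by
  induction h with
  | rel _ _ h => exact rel_iff_of_fgAdj hsat h
  | refl _ => exact .rfl
  | symm _ _ _ ih => exact ih.symm
  | trans _ _ _ _ _ ih₁ ih₂ => exact ih₁.trans ih₂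

lemma not_eqvGen_pswap (hsat : ∀ c ∈ C, nbSat r c) (u : Pairs V) :
    ¬ EqvGen (FGAdj C) u (pswap u) := fun h =>
  iff_not_self ((rel_iff_of_eqvGen hsat h).trans (rel_pswap_iff_not r u))

lemma IsComp.forall_rel_or_forall_rel_swap (hsat : ∀ c ∈ C, nbSat r c) {S : Set (Pairs V)}
    (hS : IsComp C S) : (∀ u ∈ S, r u.1.1 u.1.2) ∨ (∀ u ∈ S, r u.1.2 u.1.1) := by
  obtain ⟨u₀, rfl⟩ := hS
  by_cases h₀ : r u₀.1.1 u₀.1.2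
  · exact .inl fun u hu => (rel_iff_of_eqvGen hsat hu).1 h₀
  · exact .inr fun u hu =>
      (rel_swap_iff_not r u.2).2 fun h => h₀ ((rel_iff_of_eqvGen hsat hu).2 h)

lemma rel_iff_of_mem {S : Set (Pairs V)}
    (hS : (∀ u ∈ S, r u.1.1 u.1.2) ∨ (∀ u ∈ S, r u.1.2 u.1.1)) {u v : Pairs V}
    (hu : u ∈ S) (hv : v ∈ S) : r u.1.1 u.1.2 ↔ r v.1.1 v.1.2 := by
  rcases hS with hS | hS
  · exact iff_of_true (hS u hu) (hS v hv)
  · exact iff_of_false (asymm (hS u hu)) (asymm (hS v hv))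

lemma rel_iff_of_fgAdj_of_orient {ι : Type*} {S : ι → Set (Pairs V)}
    (hS : ∀ i, IsComp C (S i))
    (hcover : ∀ u, ∃ i, u ∈ S i ∪ pswap '' S i)
    (hr : ∀ i, (∀ u ∈ S i, r u.1.1 u.1.2) ∨ (∀ u ∈ S i, r u.1.2 u.1.1))
    {u v : Pairs V} (h : FGAdj C u v) : r u.1.1 u.1.2 ↔ r v.1.1 v.1.2 := by
  obtain ⟨i, hu | hu⟩ := hcover u
  · exact rel_iff_of_mem (hr i) hu ((hS i).mem_of_fgAdj hu h)
  · rw [pswap_involutive.image_eq_preimage_symm] at hu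
    have hv := (hS i).mem_of_fgAdj hu h.pswap
    rw [← not_iff_not, ← rel_pswap_iff_not, ← rel_pswap_iff_not]
    exact rel_iff_of_mem (hr i) hu hv

lemma forall_nbSat_of_rel_iff (h : ∀ u v, FGAdj C u v → (r u.1.1 u.1.2 ↔ r v.1.1 v.1.2)) :
    ∀ c ∈ C, nbSat r c := by
  intro c hc
  by_cases h₁ : c.1 = c.2.1
  · exact ⟨fun h' => irrefl _ (h₁ ▸ h'.1), fun h' => irrefl _ (h₁ ▸ h'.2)⟩
  by_cases h₂ : c.2.2 = c.2.1
  · exact ⟨fun h' => irrefl _ (h₂ ▸ h'.2), fun h' => irrefl _ (h₂ ▸ h'.1)⟩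
  exact (nbSat_iff_rel_iff_rel r h₁ h₂).2 <|
    h ⟨_, h₁⟩ ⟨_, h₂⟩ ⟨c, hc, .inl ⟨rfl, rfl⟩⟩

end Orientation

section ComplementaryPairs

variable (C : Set (V × V × V))

def compPairSetoid : Setoid (Pairs V) where
  r u v := EqvGen (FGAdj C) u v ∨ EqvGen (FGAdj C) u (pswap v)
  iseqv := by
    refine ⟨fun u => .inl (.refl u), ?_, ?_⟩
    · rintro u v (h | h)
      · exact .inl (.symm _ _ h)
      · exact .inr (.symm _ _ h.pswap)
    · rintro u v w (h | h) (h' | h')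
      · exact .inl (.trans _ _ _ h h')
      · exact .inr (.trans _ _ _ h h')
      · exact .inr (.trans _ _ _ h h'.pswap)
      · exact .inl (.trans _ _ _ h h'.pswap)

lemma mem_component_union_iff (u v : Pairs V) :
    v ∈ {w | EqvGen (FGAdj C) u w} ∪ pswap '' {w | EqvGen (FGAdj C) u w} ↔
      compPairSetoid C u v := by
  rw [pswap_involutive.image_eq_preimage_symm]
  rfl

lemma exists_fin_compPair_partition [Finite V]
    (hC : ∀ u : Pairs V, ¬ EqvGen (FGAdj C) u (pswap u)) :
    ∃ (k : ℕ) (S : Fin k → Set (Pairs V)), (∀ i, IsComp C (S i)) ∧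
      (∀ i, Disjoint (S i) (pswap '' S i)) ∧
      (∀ u : Pairs V, ∃! i, u ∈ S i ∪ pswap '' S i) := by
  obtain ⟨k, ⟨e⟩⟩ := Finite.exists_equiv_fin (Quotient (compPairSetoid C))
  refine ⟨k, fun i => {w | EqvGen (FGAdj C) (e.symm i).out w}, fun i => ⟨_, rfl⟩, ?_, ?_⟩
  · intro i
    rw [Set.disjoint_left]
    rintro _ hx ⟨w, hw, rfl⟩
    exact hC w (.trans _ _ _ (.symm _ _ hw) hx)
  · intro u
    have key : ∀ i, u ∈ {w | EqvGen (FGAdj C) (e.symm i).out w} ∪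
        pswap '' {w | EqvGen (FGAdj C) (e.symm i).out w} ↔ i = e ⟦u⟧ := fun i => by
      rw [mem_component_union_iff, ← Quotient.eq (r := compPairSetoid C), Quotient.out_eq,
        Equiv.symm_apply_eq]
    simp_rw [key]
    exact existsUnique_eq

end ComplementaryPairs

end

theorem stmt8_general {V : Type*} [Fintype V] (C : Set (V × V × V)) :
    (∃ r : V → V → Prop, IsStrictTotalOrder V r ∧ ∀ c ∈ C, nbSat r c) ↔
    ((∀ u : Pairs V, ¬ Relation.EqvGen (FGAdj C) u (pswap u)) ∧
     ∀ (k : ℕ) (S : Fin k → Set (Pairs V)),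
       (∀ i, IsComp C (S i)) →
       (∀ i, Disjoint (S i) (pswap '' S i)) →
       (∀ u : Pairs V, ∃! i, u ∈ S i ∪ pswap '' S i) →
       ∃ r : V → V → Prop, IsStrictTotalOrder V r ∧
         ∀ i, (∀ u ∈ S i, r u.1.1 u.1.2) ∨ (∀ u ∈ S i, r u.1.2 u.1.1)) := by
  constructor
  · rintro ⟨r, hr, hsat⟩
    exact ⟨not_eqvGen_pswap hsat, fun k S hS _ _ =>
      ⟨r, hr, fun i => (hS i).forall_rel_or_forall_rel_swap hsat⟩⟩
  · rintro ⟨hcompl, horient⟩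
    obtain ⟨k, S, hS, hdisj, hcover⟩ := exists_fin_compPair_partition C hcompl
    obtain ⟨r, hr, hrS⟩ := horient k S hS hdisj hcover
    exact ⟨r, hr, forall_nbSat_of_rel_iff fun u v =>
      rel_iff_of_fgAdj_of_orient hS (fun u => (hcover u).exists) hrS⟩

/-- a set of NB constraints `C` is satisfiable by some linear order iff no
connected component of the formula graph contains a vertex together with its complement,
and for the complementary pairs partition `S_1, ..., S_k` at least one of the `2^k`
orientations (each `S_i` kept or fully reversed) is acyclic, i.e. is realized by a
strict linear order. -/
theorem stmt8 {V : Type*} [Fintype V] (C : Set (V × V × V))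
    (hC : ∀ c ∈ C, c.1 ≠ c.2.1 ∧ c.2.1 ≠ c.2.2 ∧ c.1 ≠ c.2.2) :
    (∃ r : V → V → Prop, IsStrictTotalOrder V r ∧ ∀ c ∈ C, nbSat r c) ↔
    ((∀ u : Pairs V, ¬ Relation.EqvGen (FGAdj C) u (pswap u)) ∧
     ∀ (k : ℕ) (S : Fin k → Set (Pairs V)),
       (∀ i, IsComp C (S i)) →
       (∀ i, Disjoint (S i) (pswap '' S i)) →
       (∀ u : Pairs V, ∃! i, u ∈ S i ∪ pswap '' S i) →
       ∃ r : V → V → Prop, IsStrictTotalOrder V r ∧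
         ∀ i, (∀ u ∈ S i, r u.1.1 u.1.2) ∨ (∀ u ∈ S i, r u.1.2 u.1.1)) :=
  stmt8_general C
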